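/- arXiv:1804.00106 — 2 statements merged into one kernel-verified Lean document; each statement's English description precedes it below -/
import Mathlib

section
/- (Upper bound on the tightening constant when the intersection is nonempty) Let t = (t₁, …, tₘ) be a weight vector with tᵢ ≥ 0 and Σᵢ tᵢ = 1. If the intersection F = ⋂_{i=1}^m E(xᵢ,Pᵢ) is nonempty, then δ_t ≤ 1. -/
/-! For `y` in the intersection, completing the square gives
`∑ᵢ tᵢ (y - xᵢ)ᵀ Pᵢ⁻¹ (y - xᵢ) = (y - x_t)ᵀ P_t⁻¹ (y - x_t) + δ_t`.
The left side is a convex combination of numbers `≤ 1`, and the first term on the right is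
nonnegative since `P_t⁻¹` is positive definite; hence `δ_t ≤ 1`. -/

open Matrix

namespace Matrix

variable {ι n R : Type*} [Fintype ι]

theorem isSymm_sum_smul {S : Type*} [AddCommMonoid R] [SMul S R] {t : ι → S}
    {Q : ι → Matrix n n R} (hQ : ∀ i, (Q i).IsSymm) : (∑ i, t i • Q i).IsSymm := by
  simp only [IsSymm, transpose_sum, transpose_smul, (hQ _).eq]

theorem posDef_sum_smul {Q : ι → Matrix n n ℝ} (hQ : ∀ i, (Q i).PosDef) {t : ι → ℝ}
    (ht : ∀ i, 0 ≤ t i) {j : ι} (hj : 0 < t j) : (∑ i, t i • Q i).PosDef := by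
  classical
  rw [← Finset.add_sum_erase _ _ (Finset.mem_univ j)]
  exact ((hQ j).smul hj).add_posSemidef
    (posSemidef_sum _ fun i _ => (hQ i).posSemidef.smul (ht i))

section CommRing

variable [Fintype n] [CommRing R]

theorem IsSymm.dotProduct_mulVec_comm {Q : Matrix n n R} (hQ : Q.IsSymm) (a b : n → R) :
    a ⬝ᵥ Q *ᵥ b = b ⬝ᵥ Q *ᵥ a := by
  rw [dotProduct_mulVec, dotProduct_comm, ← hQ.eq, vecMul_transpose, hQ.eq]

theorem IsSymm.sub_dotProduct_mulVec_sub {Q : Matrix n n R} (hQ : Q.IsSymm) (a c : n → R) :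
    (a - c) ⬝ᵥ Q *ᵥ (a - c) = a ⬝ᵥ Q *ᵥ a - 2 * (a ⬝ᵥ Q *ᵥ c) + c ⬝ᵥ Q *ᵥ c := by
  rw [mulVec_sub, sub_dotProduct, dotProduct_sub, dotProduct_sub, hQ.dotProduct_mulVec_comm c a]
  ring

theorem dotProduct_sum_smul_mulVec (t : ι → R) (Q : ι → Matrix n n R) (a : n → R)
    (b : ι → n → R) :
    a ⬝ᵥ ∑ i, t i • (Q i *ᵥ b i) = ∑ i, t i * (a ⬝ᵥ Q i *ᵥ b i) := by
  simp only [dotProduct_sum, dotProduct_smul, smul_eq_mul]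

theorem sum_mul_sub_dotProduct_mulVec_sub {Q : ι → Matrix n n R} (hQ : ∀ i, (Q i).IsSymm)
    (t : ι → R) (x : ι → n → R) {z : n → R}
    (hz : (∑ i, t i • Q i) *ᵥ z = ∑ i, t i • (Q i *ᵥ x i)) (y : n → R) :
    ∑ i, t i * ((y - x i) ⬝ᵥ Q i *ᵥ (y - x i)) =
      (y - z) ⬝ᵥ (∑ i, t i • Q i) *ᵥ (y - z) +
        ((∑ i, t i * (x i ⬝ᵥ Q i *ᵥ x i)) - z ⬝ᵥ (∑ i, t i • Q i) *ᵥ z) := by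
  have hyy : y ⬝ᵥ (∑ i, t i • Q i) *ᵥ y = ∑ i, t i * (y ⬝ᵥ Q i *ᵥ y) := by
    simp only [sum_mulVec, smul_mulVec, dotProduct_sum_smul_mulVec]
  have hyz : y ⬝ᵥ (∑ i, t i • Q i) *ᵥ z = ∑ i, t i * (y ⬝ᵥ Q i *ᵥ x i) := by
    rw [hz, dotProduct_sum_smul_mulVec]
  simp only [(hQ _).sub_dotProduct_mulVec_sub, (isSymm_sum_smul hQ).sub_dotProduct_mulVec_sub,
    hyy, hyz, mul_add, mul_sub, Finset.sum_add_distrib, Finset.sum_sub_distrib, Finset.mul_sum,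
    mul_left_comm (t _) (2 : R)]
  ring

end CommRing

end Matrix

theorem tightening_constant_le_one_general (n m : ℕ)
    (x : Fin m → (Fin n → ℝ)) (P : Fin m → Matrix (Fin n) (Fin n) ℝ)
    (hP : ∀ i, (P i).PosDef)
    (t : Fin m → ℝ) (ht : ∀ i, 0 ≤ t i) (hts : ∑ i, t i = 1)
    (Ptinv : Matrix (Fin n) (Fin n) ℝ) (hPtinv : Ptinv = ∑ i, t i • (P i)⁻¹)
    (xt : Fin n → ℝ) (hxt : xt = Ptinv⁻¹ *ᵥ (∑ i, t i • ((P i)⁻¹ *ᵥ x i)))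
    (δ : ℝ) (hδ : δ = (∑ i, t i * (x i ⬝ᵥ ((P i)⁻¹ *ᵥ x i))) - xt ⬝ᵥ (Ptinv *ᵥ xt))
    (hF : ∃ y : Fin n → ℝ, ∀ i, (y - x i) ⬝ᵥ ((P i)⁻¹ *ᵥ (y - x i)) ≤ 1) :
    δ ≤ 1 := by
  obtain ⟨y, hy⟩ := hF
  obtain ⟨j, -, hj⟩ : ∃ j ∈ Finset.univ, (0 : Fin m → ℝ) j < t j :=
    Finset.exists_lt_of_sum_lt (by simp [hts])
  have hPtinv_posDef : Ptinv.PosDef := hPtinv ▸ posDef_sum_smul (fun i => (hP i).inv) ht hj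
  have hcentre : Ptinv *ᵥ xt = ∑ i, t i • ((P i)⁻¹ *ᵥ x i) := by
    rw [hxt, mulVec_mulVec,
      mul_nonsing_inv _ ((isUnit_iff_isUnit_det _).mp hPtinv_posDef.isUnit), one_mulVec]
  have hcomplete := sum_mul_sub_dotProduct_mulVec_sub
    (fun i => isHermitian_iff_isSymm.mp (hP i).inv.isHermitian) t x (hPtinv ▸ hcentre) y
  rw [← hPtinv, ← hδ] at hcomplete
  have hmean : ∑ i, t i * ((y - x i) ⬝ᵥ (P i)⁻¹ *ᵥ (y - x i)) ≤ 1 :=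
    calc _ ≤ ∑ i, t i * 1 :=
          Finset.sum_le_sum fun i _ => mul_le_mul_of_nonneg_left (hy i) (ht i)
      _ = 1 := by simp [hts]
  have hsq_nonneg : 0 ≤ (y - xt) ⬝ᵥ Ptinv *ᵥ (y - xt) := by
    simpa using hPtinv_posDef.posSemidef.dotProduct_mulVec_nonneg (y - xt)
  linarith

/-- (Upper bound on the tightening constant when the intersection is nonempty) For weights
`tᵢ ≥ 0` with `Σᵢ tᵢ = 1`, if the intersection `F = ⋂ᵢ E(xᵢ, Pᵢ)` is nonempty then
`δ_t ≤ 1`. -/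
theorem tightening_constant_le_one (n m : ℕ) (hn : 0 < n) (hm : 0 < m)
    (x : Fin m → (Fin n → ℝ)) (P : Fin m → Matrix (Fin n) (Fin n) ℝ)
    (hP : ∀ i, (P i).PosDef)
    (t : Fin m → ℝ) (ht : ∀ i, 0 ≤ t i) (hts : ∑ i, t i = 1)
    (Ptinv : Matrix (Fin n) (Fin n) ℝ) (hPtinv : Ptinv = ∑ i, t i • (P i)⁻¹)
    (xt : Fin n → ℝ) (hxt : xt = Ptinv⁻¹ *ᵥ (∑ i, t i • ((P i)⁻¹ *ᵥ x i)))
    (δ : ℝ) (hδ : δ = (∑ i, t i * (x i ⬝ᵥ ((P i)⁻¹ *ᵥ x i))) - xt ⬝ᵥ (Ptinv *ᵥ xt))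
    (hF : ∃ y : Fin n → ℝ, ∀ i, (y - x i) ⬝ᵥ ((P i)⁻¹ *ᵥ (y - x i)) ≤ 1) :
    δ ≤ 1 :=
  tightening_constant_le_one_general n m x P hP t ht hts Ptinv hPtinv xt hxt δ hδ hF
end

section
/- (Bounding ellipsoid contains the intersection) Let t = (t₁, …, tₘ) be a weight vector with tᵢ ≥ 0 and Σᵢ tᵢ = 1. Then for every x ∈ F one has (x−x_t)ᵀP_t⁻¹(x−x_t) ≤ 1 − δ_t. In particular, if δ_t < 1 then F ⊆ E(x_t, (1−δ_t)P_t) = {x ∈ ℝⁿ : (x−x_t)ᵀ((1−δ_t)P_t)⁻¹(x−x_t) ≤ 1}. -/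
/-!
Completing the square: for every `y`,
`∑ᵢ tᵢ (y - xᵢ)ᵀ Pᵢ⁻¹ (y - xᵢ) = (y - x_t)ᵀ P_t⁻¹ (y - x_t) + δ_t`,
because `P_t⁻¹ x_t = ∑ᵢ tᵢ Pᵢ⁻¹ xᵢ`. On `F` every summand on the left is at most `tᵢ`, so the left
side is at most `∑ᵢ tᵢ = 1`. Since some `tᵢ` is positive, `P_t⁻¹` is positive definite, hence
invertible.
-/

open Matrix

namespace Matrix

theorem IsSymm.dotProduct_mulVec_comm_s12 {n α : Type*} [Fintype n] [CommSemiring α]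
    {A : Matrix n n α} (hA : A.IsSymm) (u v : n → α) : u ⬝ᵥ (A *ᵥ v) = v ⬝ᵥ (A *ᵥ u) := by
  rw [dotProduct_mulVec, ← mulVec_transpose, hA.eq, dotProduct_comm]

theorem IsSymm.dotProduct_mulVec_sub {n α : Type*} [Fintype n] [CommRing α]
    {A : Matrix n n α} (hA : A.IsSymm) (u v : n → α) :
    (u - v) ⬝ᵥ (A *ᵥ (u - v)) = u ⬝ᵥ (A *ᵥ u) - 2 * (u ⬝ᵥ (A *ᵥ v)) + v ⬝ᵥ (A *ᵥ v) := by
  simp only [mulVec_sub, sub_dotProduct, dotProduct_sub, hA.dotProduct_mulVec_comm_s12 v u]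
  ring

theorem dotProduct_sum_smul_mulVec_s12 {ι n α : Type*} [Fintype ι] [Fintype n] [CommSemiring α]
    (w : ι → α) (A : ι → Matrix n n α) (u v : n → α) :
    u ⬝ᵥ ((∑ i, w i • A i) *ᵥ v) = ∑ i, w i * (u ⬝ᵥ (A i *ᵥ v)) := by
  simp only [sum_mulVec, dotProduct_sum, smul_mulVec, dotProduct_smul, smul_eq_mul]

theorem sum_mul_dotProduct_mulVec_sub_eq {ι n α : Type*} [Fintype ι] [Fintype n] [CommRing α]
    (w : ι → α) {A : ι → Matrix n n α} (hA : ∀ i, (A i).IsSymm) (c : ι → n → α)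
    {Q : Matrix n n α} (hQ : Q = ∑ i, w i • A i) {z : n → α}
    (hz : Q *ᵥ z = ∑ i, w i • (A i *ᵥ c i)) (y : n → α) :
    ∑ i, w i * ((y - c i) ⬝ᵥ (A i *ᵥ (y - c i))) =
      (y - z) ⬝ᵥ (Q *ᵥ (y - z)) + (∑ i, w i * (c i ⬝ᵥ (A i *ᵥ c i)) - z ⬝ᵥ (Q *ᵥ z)) := by
  have hQsymm : Q.IsSymm := by
    simp only [hQ, IsSymm, transpose_sum, transpose_smul, (hA _).eq]
  have hyy : y ⬝ᵥ (Q *ᵥ y) = ∑ i, w i * (y ⬝ᵥ (A i *ᵥ y)) :=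
    hQ ▸ dotProduct_sum_smul_mulVec_s12 w A y y
  have hyz : y ⬝ᵥ (Q *ᵥ z) = ∑ i, w i * (y ⬝ᵥ (A i *ᵥ c i)) := by
    simp only [hz, dotProduct_sum, dotProduct_smul, smul_eq_mul]
  rw [hQsymm.dotProduct_mulVec_sub, hyy, hyz]
  simp only [(hA _).dotProduct_mulVec_sub, mul_add, mul_sub, Finset.sum_add_distrib,
    Finset.sum_sub_distrib, mul_left_comm (w _) 2, ← Finset.mul_sum]
  ring

theorem posDef_sum_smul_s12 {ι n : Type*} [Fintype ι] {A : ι → Matrix n n ℝ}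
    (hA : ∀ i, (A i).PosDef) {w : ι → ℝ} (hw : ∀ i, 0 ≤ w i) (hw₀ : ∃ i, w i ≠ 0) :
    (∑ i, w i • A i).PosDef := by
  classical
  obtain ⟨i₀, hi₀⟩ := hw₀
  rw [← Finset.sum_filter_of_ne (p := fun i ↦ w i ≠ 0) fun i _ h hi ↦ h (by simp [hi])]
  refine posDef_sum ⟨i₀, by simpa using hi₀⟩ fun i hi ↦ (hA i).smul ?_
  exact (hw i).lt_of_ne' (Finset.mem_filter.1 hi).2

theorem smul_nonsing_inv_inv {n α : Type*} [Fintype n] [DecidableEq n] [Field α]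
    {A : Matrix n n α} (hA : IsUnit A.det) {k : α} (hk : k ≠ 0) : (k • A⁻¹)⁻¹ = k⁻¹ • A := by
  refine inv_eq_left_inv ?_
  rw [smul_mul_smul_comm, inv_mul_cancel₀ hk, mul_nonsing_inv A hA, one_smul]

end Matrix

theorem bounding_ellipsoid_contains_intersection_general (n m : ℕ)
    (x : Fin m → (Fin n → ℝ)) (P : Fin m → Matrix (Fin n) (Fin n) ℝ)
    (hP : ∀ i, (P i).PosDef)
    (t : Fin m → ℝ) (ht : ∀ i, 0 ≤ t i) (hts : ∑ i, t i = 1)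
    (Ptinv : Matrix (Fin n) (Fin n) ℝ) (hPtinv : Ptinv = ∑ i, t i • (P i)⁻¹)
    (xt : Fin n → ℝ) (hxt : xt = Ptinv⁻¹ *ᵥ (∑ i, t i • ((P i)⁻¹ *ᵥ x i)))
    (δ : ℝ) (hδ : δ = (∑ i, t i * (x i ⬝ᵥ ((P i)⁻¹ *ᵥ x i))) - xt ⬝ᵥ (Ptinv *ᵥ xt)) :
    (∀ y : Fin n → ℝ, (∀ i, (y - x i) ⬝ᵥ ((P i)⁻¹ *ᵥ (y - x i)) ≤ 1) →
        (y - xt) ⬝ᵥ (Ptinv *ᵥ (y - xt)) ≤ 1 - δ) ∧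
      (δ < 1 →
        {y : Fin n → ℝ | ∀ i, (y - x i) ⬝ᵥ ((P i)⁻¹ *ᵥ (y - x i)) ≤ 1} ⊆
          {y : Fin n → ℝ | (y - xt) ⬝ᵥ (((1 - δ) • Ptinv⁻¹)⁻¹ *ᵥ (y - xt)) ≤ 1}) := by
  obtain ⟨i₀, -, hi₀⟩ := Finset.exists_ne_zero_of_sum_ne_zero (hts ▸ one_ne_zero : ∑ i, t i ≠ 0)
  have hPt : Ptinv.PosDef := hPtinv ▸ posDef_sum_smul_s12 (fun i ↦ (hP i).inv) ht ⟨i₀, hi₀⟩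
  have hdet : IsUnit Ptinv.det := (isUnit_iff_isUnit_det Ptinv).1 hPt.isUnit
  have hxt' : Ptinv *ᵥ xt = ∑ i, t i • ((P i)⁻¹ *ᵥ x i) := by
    rw [hxt, mulVec_mulVec, mul_nonsing_inv _ hdet, one_mulVec]
  have hsquare := sum_mul_dotProduct_mulVec_sub_eq t
    (fun i ↦ isHermitian_iff_isSymm.1 (hP i).inv.isHermitian) x hPtinv hxt'
  have hbound : ∀ y : Fin n → ℝ, (∀ i, (y - x i) ⬝ᵥ ((P i)⁻¹ *ᵥ (y - x i)) ≤ 1) →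
      (y - xt) ⬝ᵥ (Ptinv *ᵥ (y - xt)) ≤ 1 - δ := by
    intro y hy
    have hsum : ∑ i, t i * ((y - x i) ⬝ᵥ ((P i)⁻¹ *ᵥ (y - x i))) ≤ 1 :=
      hts ▸ Finset.sum_le_sum fun i _ ↦ mul_le_of_le_one_right (ht i) (hy i)
    linarith [hsquare y]
  refine ⟨hbound, fun hδ₁ y hy ↦ ?_⟩
  have hpos : 0 < 1 - δ := sub_pos.2 hδ₁
  rw [Set.mem_ofPred_eq, smul_nonsing_inv_inv hdet hpos.ne', smul_mulVec, dotProduct_smul,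
    smul_eq_mul, inv_mul_le_iff₀ hpos, mul_one]
  exact hbound y hy

/-- (Bounding ellipsoid contains the intersection) For weights `tᵢ ≥ 0` with `Σᵢ tᵢ = 1`,
every `x ∈ F = ⋂ᵢ E(xᵢ, Pᵢ)` satisfies `(x-x_t)ᵀP_t⁻¹(x-x_t) ≤ 1 - δ_t`; in particular,
if `δ_t < 1` then `F ⊆ E(x_t, (1-δ_t)P_t)`. -/
theorem bounding_ellipsoid_contains_intersection (n m : ℕ) (hn : 0 < n) (hm : 0 < m)
    (x : Fin m → (Fin n → ℝ)) (P : Fin m → Matrix (Fin n) (Fin n) ℝ)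
    (hP : ∀ i, (P i).PosDef)
    (t : Fin m → ℝ) (ht : ∀ i, 0 ≤ t i) (hts : ∑ i, t i = 1)
    (Ptinv : Matrix (Fin n) (Fin n) ℝ) (hPtinv : Ptinv = ∑ i, t i • (P i)⁻¹)
    (xt : Fin n → ℝ) (hxt : xt = Ptinv⁻¹ *ᵥ (∑ i, t i • ((P i)⁻¹ *ᵥ x i)))
    (δ : ℝ) (hδ : δ = (∑ i, t i * (x i ⬝ᵥ ((P i)⁻¹ *ᵥ x i))) - xt ⬝ᵥ (Ptinv *ᵥ xt)) :
    (∀ y : Fin n → ℝ, (∀ i, (y - x i) ⬝ᵥ ((P i)⁻¹ *ᵥ (y - x i)) ≤ 1) →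
        (y - xt) ⬝ᵥ (Ptinv *ᵥ (y - xt)) ≤ 1 - δ) ∧
      (δ < 1 →
        {y : Fin n → ℝ | ∀ i, (y - x i) ⬝ᵥ ((P i)⁻¹ *ᵥ (y - x i)) ≤ 1} ⊆
          {y : Fin n → ℝ | (y - xt) ⬝ᵥ (((1 - δ) • Ptinv⁻¹)⁻¹ *ᵥ (y - xt)) ≤ 1}) :=
  bounding_ellipsoid_contains_intersection_general n m x P hP t ht hts Ptinv hPtinv xt hxt δ hδ
end
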